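/- Playing moves that are never inside a 1 × m horizontally-aligned rectangle R of distinct-coloured columns (i.e. all moves are made in the area external to R, which is adjacent only to R's leftmost column), at least m moves are required to absorb all of R: each external move can extend the flooded area into R by at most one further column. -/

import Mathlib

namespace Flood

variable {V C : Type*}

/-- Two vertices are joined by an edge inside a monochromatic class. -/
def monoAdj (G : SimpleGraph V) (ω : V → C) (a b : V) : Prop :=
  G.Adj a b ∧ ω a = ω b

/-- `u` and `v` lie in a common monochromatic component of the colouring `ω`. -/
def monoLinked (G : SimpleGraph V) (ω : V → C) (u v : V) : Prop :=
  Relation.ReflTransGen (monoAdj G ω) u v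

/-- One flooding move: recolour the monochromatic component of `v` with colour `d`. -/
noncomputable def floodMove (G : SimpleGraph V) (ω : V → C) (v : V) (d : C) : V → C :=
  fun u => @ite _ (monoLinked G ω v u) (Classical.propDecidable _) d (ω u)

/-- Apply a sequence of flooding moves. -/
noncomputable def floodSeq (G : SimpleGraph V) (ω : V → C) (S : List (V × C)) : V → C :=
  S.foldl (fun ω' m => floodMove G ω' m.1 m.2) ω

/-- The sequence `S` floods `G`, i.e. makes it monochromatic. -/
def Floods (G : SimpleGraph V) (ω : V → C) (S : List (V × C)) : Prop :=
  ∀ a b, floodSeq G ω S a = floodSeq G ω S b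

/-- Minimum number of moves needed to make `G` monochromatic. -/
noncomputable def floodCost (G : SimpleGraph V) (ω : V → C) : ℕ :=
  sInf {k | ∃ S, S.length = k ∧ Floods G ω S}

/-- Minimum number of moves needed to make `G` monochromatic in colour `d`. -/
noncomputable def floodCostIn (G : SimpleGraph V) (ω : V → C) (d : C) : ℕ :=
  sInf {k | ∃ S, S.length = k ∧ ∀ a, floodSeq G ω S a = d}

/-- The sequence `S` links `u` and `v`. -/
def Links (G : SimpleGraph V) (ω : V → C) (S : List (V × C)) (u v : V) : Prop :=
  monoLinked G (floodSeq G ω S) u v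

/-- Minimum number of moves needed to link `u` and `v`. -/
noncomputable def linkCost (G : SimpleGraph V) (ω : V → C) (u v : V) : ℕ :=
  sInf {k | ∃ S, S.length = k ∧ Links G ω S u v}

/-- Minimum number of moves needed to link `u` and `v` in a monochromatic
component of colour `d`. -/
noncomputable def linkCostIn (G : SimpleGraph V) (ω : V → C) (u v : V) (d : C) : ℕ :=
  sInf {k | ∃ S, S.length = k ∧ Links G ω S u v ∧ floodSeq G ω S u = d}


end Flood

open Flood

/-
A move at `0` recolours only the component of `0`. By induction, after `k` moves that component lies
in the first `k` columns and every later column keeps its original colour; so after one more move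
columns `k + 1` and `k + 2` still carry distinct colours, and no monochromatic path from `0` crosses
the edge between them.
-/

namespace Flood

variable {V C : Type*}

theorem floodMove_of_not_monoLinked {G : SimpleGraph V} {ω : V → C} {v u : V} (d : C)
    (h : ¬ monoLinked G ω v u) : floodMove G ω v d u = ω u :=
  if_neg h

theorem floodSeq_cons (G : SimpleGraph V) (ω : V → C) (x : V × C) (S : List (V × C)) :
    floodSeq G ω (x :: S) = floodSeq G (floodMove G ω x.1 x.2) S :=
  rfl

theorem val_le_of_monoLinked_pathGraph {n k : ℕ} {ω : Fin n → C}
    (hcut : ∀ a b : Fin n, a.val = k → b.val = k + 1 → ω a ≠ ω b) {u x : Fin n}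
    (hu : u.val ≤ k) (h : monoLinked (SimpleGraph.pathGraph n) ω u x) : x.val ≤ k := by
  induction h with
  | refl => exact hu
  | @tail b c _ hbc =>
    obtain ⟨hadj, hcol⟩ := hbc
    rw [SimpleGraph.pathGraph_adj] at hadj
    by_contra hc
    exact hcut b c (by omega) (by omega) hcol

variable {m : ℕ}

/-- After `k` moves at the external vertex `0` of the strip coloured `ω`, the colouring `ω'` has
flooded at most the first `k` columns and left the others untouched. -/
def FloodConfined (ω : Fin (m + 1) → C) (k : ℕ) (ω' : Fin (m + 1) → C) : Prop :=
  (∀ x : Fin (m + 1), k < x.val → ω' x = ω x) ∧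
    ∀ x : Fin (m + 1), monoLinked (SimpleGraph.pathGraph (m + 1)) ω' 0 x → x.val ≤ k

variable {ω : Fin (m + 1) → C}

theorem floodConfined_zero (hω : Function.Injective ω) : FloodConfined ω 0 ω := by
  refine ⟨fun _ _ => rfl, fun x hx => val_le_of_monoLinked_pathGraph ?_ le_rfl hx⟩
  intro a b ha hb
  exact hω.ne (Fin.ne_of_val_ne (by omega))

theorem FloodConfined.floodMove (hω : Function.Injective ω) {k : ℕ} {ω' : Fin (m + 1) → C}
    (h : FloodConfined ω k ω') (d : C) :
    FloodConfined ω (k + 1) (Flood.floodMove (SimpleGraph.pathGraph (m + 1)) ω' 0 d) := by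
  obtain ⟨huntouched, hlinked⟩ := h
  have huntouched' : ∀ x : Fin (m + 1), k < x.val →
      Flood.floodMove (SimpleGraph.pathGraph (m + 1)) ω' 0 d x = ω x := fun x hx => by
    rw [floodMove_of_not_monoLinked d fun hl => absurd (hlinked x hl) (by omega)]
    exact huntouched x hx
  refine ⟨fun x hx => huntouched' x (by omega), fun x hx => ?_⟩
  refine val_le_of_monoLinked_pathGraph (fun a b ha hb => ?_) (Nat.zero_le _) hx
  rw [huntouched' a (by omega), huntouched' b (by omega)]
  exact hω.ne (Fin.ne_of_val_ne (by omega))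

theorem FloodConfined.floodSeq (hω : Function.Injective ω) (S : List C) {k : ℕ}
    {ω' : Fin (m + 1) → C} (h : FloodConfined ω k ω') :
    FloodConfined ω (k + S.length)
      (Flood.floodSeq (SimpleGraph.pathGraph (m + 1)) ω'
        (S.map fun d => ((0 : Fin (m + 1)), d))) := by
  induction S generalizing k ω' with
  | nil => exact h
  | cons d S ih =>
    rw [List.map_cons, floodSeq_cons, List.length_cons, ← add_assoc, add_right_comm]
    exact ih (h.floodMove hω d)

end Flood

/-- in a strip of `m` distinct-coloured columns attached to an
external area (vertex `0` of a path graph, adjacent only to the first column),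
any sequence of moves played in the external component that absorbs all of the
strip has length at least `m`. -/
theorem strip_needs_m_moves {C : Type*} (m : ℕ) (ω : Fin (m + 1) → C)
    (hdistinct : Function.Injective ω) (S : List C)
    (habsorb : ∀ x : Fin (m + 1),
      monoLinked (SimpleGraph.pathGraph (m + 1))
        (floodSeq (SimpleGraph.pathGraph (m + 1)) ω
          (S.map fun d => ((0 : Fin (m + 1)), d))) 0 x) :
    m ≤ S.length := by
  have hconfined := (floodConfined_zero hdistinct).floodSeq hdistinct S
  simpa using hconfined.2 (Fin.last m) (habsorb (Fin.last m))
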